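/- arXiv:1703.10959 — 7 statements merged into one kernel-verified Lean document; each statement's English description precedes it below -/
import Mathlib

section
/- Soundness and serializability of strong parallelism: if A ⇉ B in the parallel semantics (generated inductively from ↦ by Intro-Par and the Parallel rule with overlaps), then there exists a sequential computation A ↦* B. -/
/-- The strong parallel CHR transition relation, generated from the sequential
relation `r` by (Intro-Par) and (Parallel) with overlaps. -/
inductive Par {M : Type*} [CommMonoid M] (r : M → M → Prop) : M → M → Prop
  | intro : ∀ {A C : M}, r A C → Par r A C
  | par : ∀ {A B C D E : M}, Par r (A * E) (C * E) → Par r (B * E) (D * E) →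
      Par r (A * B * E) (C * D * E)

/-- Soundness and serializability of strong parallelism: every parallel step
has a corresponding sequential computation. -/
theorem par_soundness {M : Type*} [CommMonoid M]
    (r : M → M → Prop)
    (mono : ∀ A B G : M, r A B → r (A * G) (B * G)) :
    ∀ A B : M, Par r A B → Relation.ReflTransGen r A B := by
  have monoStar : ∀ X Y G : M, Relation.ReflTransGen r X Y →
      Relation.ReflTransGen r (X * G) (Y * G) := by
    intro X Y G h
    induction h with
    | refl => exact Relation.ReflTransGen.refl
    | tail _ hstep ih => exact ih.tail (mono _ _ G hstep)
  intro A B h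
  induction h with
  | intro h => exact Relation.ReflTransGen.single h
  | @par A B C D E _ _ ih1 ih2 =>
    have h1 : Relation.ReflTransGen r (A * E * B) (C * E * B) := monoStar _ _ _ ih1
    have h2 : Relation.ReflTransGen r (B * E * C) (D * E * C) := monoStar _ _ _ ih2
    have e1 : A * B * E = A * E * B := by ac_rfl
    have e2 : C * E * B = B * E * C := by ac_rfl
    have e3 : D * E * C = C * D * E := by ac_rfl
    rw [e1, ← e3]
    exact (e2 ▸ h1).trans h2
end

section
/- The minimum program is correct: starting from a nonempty finite multiset of constraints min(n₁), …, min(n_k) of natural numbers, every terminal state of the rewriting relation consists of exactly one constraint min(m) where m is the minimum of the multiset {n₁,…,n_k}; moreover the relation terminates. -/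
/-- The minimum rule: remove the larger of two candidates. -/
def minStep (S T : Multiset ℕ) : Prop :=
  ∃ N M S', N ≤ M ∧ S = N ::ₘ M ::ₘ S' ∧ T = N ::ₘ S'

lemma minStep_card {S T : Multiset ℕ} (h : minStep S T) : T.card < S.card := by
  obtain ⟨N, M, S', _, hS, hT⟩ := h
  subst hS; subst hT; simp

lemma minStep_le {S T : Multiset ℕ} (h : minStep S T) : T ≤ S := by
  obtain ⟨N, M, S', _, hS, hT⟩ := h
  subst hS; subst hT
  calc N ::ₘ S' ≤ M ::ₘ N ::ₘ S' := Multiset.le_cons_self _ _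
    _ = N ::ₘ M ::ₘ S' := Multiset.cons_swap _ _ _

lemma minStep_dom {S T : Multiset ℕ} (h : minStep S T) :
    ∀ x ∈ S, ∃ y ∈ T, y ≤ x := by
  obtain ⟨N, M, S', hNM, hS, hT⟩ := h
  subst hS; subst hT
  intro x hx
  rcases Multiset.mem_cons.1 hx with rfl | hx
  · exact ⟨x, Multiset.mem_cons_self _ _, le_refl _⟩
  · rcases Multiset.mem_cons.1 hx with rfl | hx
    · exact ⟨N, Multiset.mem_cons_self _ _, hNM⟩
    · exact ⟨x, Multiset.mem_cons_of_mem hx, le_refl _⟩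

lemma reach_inv {S₀ T : Multiset ℕ} (hreach : Relation.ReflTransGen minStep S₀ T) :
    T ≤ S₀ ∧ ∀ x ∈ S₀, ∃ y ∈ T, y ≤ x := by
  induction hreach with
  | refl => exact ⟨le_refl _, fun x hx => ⟨x, hx, le_refl _⟩⟩
  | tail hab hbc ih =>
    refine ⟨le_trans (minStep_le hbc) ih.1, fun x hx => ?_⟩
    obtain ⟨y, hy, hyx⟩ := ih.2 x hx
    obtain ⟨z, hz, hzy⟩ := minStep_dom hbc y hy
    exact ⟨z, hz, le_trans hzy hyx⟩

/-- Correctness of the minimum program: the rewriting terminates and every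
terminal state reachable from a nonempty initial multiset is a singleton
containing the minimum of the initial multiset. -/
theorem min_program_correct :
    WellFounded (fun T S : Multiset ℕ => minStep S T) ∧
    ∀ S₀ : Multiset ℕ, S₀ ≠ 0 →
      ∀ T, Relation.ReflTransGen minStep S₀ T →
        (∀ U, ¬ minStep T U) →
        ∃ m, T = {m} ∧ m ∈ S₀ ∧ ∀ x ∈ S₀, m ≤ x := by
  constructor
  · exact Subrelation.wf (fun h => minStep_card h)
      (InvImage.wf Multiset.card Nat.lt_wfRel.wf)
  · intro S₀ hS₀ T hreach hterm
    -- invariants along the reachability relation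
    have key := reach_inv hreach
    have hT0 : T ≠ 0 := by
      intro h0
      subst h0
      obtain ⟨x, hx⟩ := Multiset.exists_mem_of_ne_zero hS₀
      obtain ⟨y, hy, _⟩ := key.2 x hx
      simp at hy
    obtain ⟨a, ha⟩ := Multiset.exists_mem_of_ne_zero hT0
    obtain ⟨T', rfl⟩ := Multiset.exists_cons_of_mem ha
    have hT'0 : T' = 0 := by
      by_contra h0
      obtain ⟨b, hb⟩ := Multiset.exists_mem_of_ne_zero h0
      obtain ⟨T'', rfl⟩ := Multiset.exists_cons_of_mem hb
      rcases le_total a b with hab | hba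
      · exact hterm (a ::ₘ T'') ⟨a, b, T'', hab, rfl, rfl⟩
      · exact hterm (b ::ₘ T'') ⟨b, a, T'', hba, (Multiset.cons_swap _ _ _).symm, rfl⟩
    subst hT'0
    refine ⟨a, rfl, ?_, ?_⟩
    · exact Multiset.mem_of_le key.1 (Multiset.mem_cons_self _ _)
    · intro x hx
      obtain ⟨y, hy, hyx⟩ := key.2 x hx
      simp only [Multiset.mem_cons, Multiset.notMem_zero, or_false] at hy
      subst hy; exact hyx
end

section
/- The prime sieve program is correct: starting from the multiset {2, 3, …, n} (n ≥ 2), the rewriting relation where one may remove an element J whenever some other element I divides J (I ≠ J as occurrences, with J mod I = 0 and I ≥ 2) terminates, and every terminal state is exactly the set of prime numbers in {2,…,n}. -/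
/-- The sieve rule: a kept element `I ≥ 2` removes an occurrence of a multiple
`J` of `I`. -/
def sieveStep (S T : Multiset ℕ) : Prop :=
  ∃ I J S', 2 ≤ I ∧ I ∣ J ∧ S = I ::ₘ J ::ₘ S' ∧ T = I ::ₘ S'

lemma sieveStep_card {S T : Multiset ℕ} (h : sieveStep S T) :
    T.card < S.card := by
  obtain ⟨I, J, S', -, -, hS, hT⟩ := h
  subst hS; subst hT; simp

lemma sieve_invariant (n : ℕ) {T : Multiset ℕ}
    (h : Relation.ReflTransGen sieveStep (Multiset.Ico 2 (n + 1)) T) :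
    T ≤ Multiset.Ico 2 (n + 1) ∧
      (Multiset.Ico 2 (n + 1)).filter Nat.Prime ≤ T := by
  induction h with
  | refl => exact ⟨le_rfl, Multiset.filter_le _ _⟩
  | tail h step ih =>
    obtain ⟨hle, hpr⟩ := ih
    obtain ⟨I, J, S', hI, hIJ, hS, hT⟩ := step
    subst hS; subst hT
    have hmono : I ::ₘ S' ≤ I ::ₘ J ::ₘ S' :=
      Multiset.cons_le_cons _ (Multiset.le_cons_self _ _)
    refine ⟨le_trans hmono hle, ?_⟩
    have hnodup : (I ::ₘ J ::ₘ S').Nodup := Multiset.nodup_of_le hle (Multiset.nodup_Ico)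
    have hJ : ¬ Nat.Prime J := by
      intro hJp
      have hIJ' : I = J :=
        (Nat.Prime.eq_one_or_self_of_dvd hJp I hIJ).resolve_left (by omega)
      subst hIJ'
      simp [Multiset.nodup_cons] at hnodup
    have h1 : (Multiset.Ico 2 (n + 1)).filter Nat.Prime ≤
        Multiset.filter Nat.Prime (I ::ₘ J ::ₘ S') :=
      Multiset.le_filter.mpr ⟨hpr, fun a ha => (Multiset.mem_filter.mp ha).2⟩
    refine le_trans h1 ?_
    by_cases hIp : Nat.Prime I
    · rw [Multiset.filter_cons_of_pos _ hIp, Multiset.filter_cons_of_neg _ hJ]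
      exact Multiset.cons_le_cons _ (Multiset.filter_le _ _)
    · rw [Multiset.filter_cons_of_neg _ hIp, Multiset.filter_cons_of_neg _ hJ]
      exact le_trans (Multiset.filter_le _ _) (Multiset.le_cons_self _ _)

/-- Correctness of the prime sieve: the rewriting terminates and, starting
from `{2, …, n}` with `n ≥ 2`, every terminal state is exactly the multiset of
primes in `{2, …, n}`. -/
theorem sieve_correct :
    WellFounded (fun T S : Multiset ℕ => sieveStep S T) ∧
    ∀ n : ℕ, 2 ≤ n →
      ∀ T, Relation.ReflTransGen sieveStep (Multiset.Ico 2 (n + 1)) T →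
        (∀ U, ¬ sieveStep T U) →
        T = (Multiset.Ico 2 (n + 1)).filter Nat.Prime := by
  constructor
  · exact Subrelation.wf (fun h => sieveStep_card h)
      (InvImage.wf Multiset.card Nat.lt_wfRel.wf)
  · intro n hn T hT hterm
    obtain ⟨hle, hpr⟩ := sieve_invariant n hT
    have hall : ∀ c ∈ T, Nat.Prime c := by
      intro c hc
      by_contra hcp
      have hc2 : 2 ≤ c ∧ c < n + 1 := by
        have := Multiset.mem_of_le hle hc
        simpa [Multiset.mem_Ico] using this
      obtain ⟨p, hp, hpd⟩ := Nat.exists_prime_and_dvd (by omega : c ≠ 1)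
      have hpc : p ≠ c := fun h => hcp (h ▸ hp)
      have hpT : p ∈ T := Multiset.mem_of_le hpr (by
        rw [Multiset.mem_filter, Multiset.mem_Ico]
        exact ⟨⟨hp.two_le, lt_of_le_of_lt (Nat.le_of_dvd (by omega) hpd) hc2.2⟩, hp⟩)
      have hcT : c ∈ T.erase p := (Multiset.mem_erase_of_ne (Ne.symm hpc)).mpr hc
      exact hterm (p ::ₘ ((T.erase p).erase c))
        ⟨p, c, (T.erase p).erase c, hp.two_le, hpd,
          by rw [Multiset.cons_erase hcT, Multiset.cons_erase hpT], rfl⟩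
    exact le_antisymm (Multiset.le_filter.mpr ⟨hle, hall⟩) hpr
end

section
/- Invariant of the GCD program: if a state S (a finite multiset of natural numbers) transitions to T by replacing an element M by M − N where N, M ∈ S with 0 < N ≤ M, then the greatest common divisor of the nonzero elements of S equals the greatest common divisor of the nonzero elements of T. -/
/-- The gcd rule: a kept positive `N` replaces `M ≥ N` by `M - N`. -/
def gcdStep (S T : Multiset ℕ) : Prop :=
  ∃ N M S', 0 < N ∧ N ≤ M ∧ S = N ::ₘ M ::ₘ S' ∧ T = N ::ₘ (M - N) ::ₘ S'

/-- Invariant of the gcd program: a transition preserves the gcd of the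
nonzero elements of the state. -/
theorem gcd_invariant {S T : Multiset ℕ} (h : gcdStep S T) :
    (S.filter (· ≠ 0)).gcd = (T.filter (· ≠ 0)).gcd := by
  obtain ⟨N, M, S', hN, hNM, rfl, rfl⟩ := h
  have hN0 : N ≠ 0 := hN.ne'
  have hM0 : M ≠ 0 := (hN.trans_le hNM).ne'
  by_cases hMN : M - N = 0
  · simp only [Multiset.filter_cons, hN0, hM0, hMN, if_pos, if_neg, ne_eq,
      not_true_eq_false, not_false_eq_true, if_true, if_false]
    simp only [Multiset.singleton_add, zero_add, Multiset.gcd_cons]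
    rw [show M = N from le_antisymm (Nat.sub_eq_zero_iff_le.mp hMN) hNM,
      ← gcd_assoc]
    congr 1
    exact Nat.gcd_self N
  · simp only [Multiset.filter_cons, hN0, hM0, hMN, ne_eq, not_false_eq_true,
      if_true, Multiset.singleton_add, Multiset.gcd_cons]
    rw [← gcd_assoc, ← gcd_assoc]
    congr 1
    exact (Nat.gcd_sub_self_right hNM).symm
end

section
/- Termination and correctness of the GCD program: starting from a finite multiset of positive natural numbers, the gcd rewriting relation terminates, and in every terminal state the multiset of nonzero elements is either empty or consists of copies of a single value d equal to the gcd of the initial multiset. -/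
lemma gcdStep_sum_lt {S T : Multiset ℕ} (h : gcdStep S T) : T.sum < S.sum := by
  obtain ⟨N, M, S', hN, hNM, rfl, rfl⟩ := h
  simp only [Multiset.sum_cons]
  omega

lemma gcdStep_gcd_eq {S T : Multiset ℕ} (h : gcdStep S T) : T.gcd = S.gcd := by
  obtain ⟨N, M, S', hN, hNM, rfl, rfl⟩ := h
  simp only [Multiset.gcd_cons]
  show Nat.gcd N (Nat.gcd (M - N) S'.gcd) = Nat.gcd N (Nat.gcd M S'.gcd)
  rw [← Nat.gcd_assoc, ← Nat.gcd_assoc, Nat.gcd_sub_self_right hNM]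

lemma reach_gcd_eq {S T : Multiset ℕ} (h : Relation.ReflTransGen gcdStep S T) :
    T.gcd = S.gcd := by
  induction h with
  | refl => rfl
  | tail _ hst ih => rw [gcdStep_gcd_eq hst, ih]

/-- Termination and correctness of the gcd program: the rewriting terminates,
and in any terminal state reachable from a multiset of positive numbers the
nonzero part is empty or consists of copies of the gcd of the initial
multiset. -/
theorem gcd_program_correct :
    WellFounded (fun T S : Multiset ℕ => gcdStep S T) ∧
    ∀ S₀ : Multiset ℕ, (∀ x ∈ S₀, 0 < x) →
      ∀ T, Relation.ReflTransGen gcdStep S₀ T →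
        (∀ U, ¬ gcdStep T U) →
        (T.filter (· ≠ 0) = 0 ∨
          ∃ d, d = S₀.gcd ∧ ∀ x ∈ T.filter (· ≠ 0), x = d) := by
  constructor
  · exact Subrelation.wf (fun h => gcdStep_sum_lt h)
      (InvImage.wf Multiset.sum Nat.lt_wfRel.wf)
  · intro S₀ _ T hreach hterm
    rcases Multiset.empty_or_exists_mem (T.filter (· ≠ 0)) with h0 | ⟨x, hx⟩
    · exact Or.inl h0
    obtain ⟨F', hF⟩ := Multiset.exists_cons_of_mem hx
    rcases Multiset.empty_or_exists_mem F' with h0 | ⟨y, hy⟩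
    · -- single nonzero element x
      right
      refine ⟨T.gcd, ?_, ?_⟩
      · exact reach_gcd_eq hreach
      · subst h0
        intro z hz
        have hz' : z ∈ T.filter (· ≠ 0) := hz
        rw [hF] at hz'
        have hzx : z = x := Multiset.mem_singleton.mp hz'
        subst hzx
        have hxT : z ∈ T := Multiset.mem_of_mem_filter hz
        refine Nat.dvd_antisymm ?_ (Multiset.gcd_dvd hxT)
        apply Multiset.dvd_gcd.mpr
        intro b hb
        by_cases hb0 : b = 0
        · simp [hb0]
        · have hbF : b ∈ T.filter (· ≠ 0) := Multiset.mem_filter_of_mem hb (by simpa using hb0)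
          rw [hF] at hbF
          have : b = z := Multiset.mem_singleton.mp hbF
          simp [this]
    · -- two nonzero elements: contradiction with terminality
      exfalso
      obtain ⟨F'', rfl⟩ := Multiset.exists_cons_of_mem hy
      have hle : (x ::ₘ y ::ₘ F'') ≤ T := hF ▸ Multiset.filter_le _ T
      obtain ⟨u, hu⟩ := Multiset.le_iff_exists_add.mp hle
      have hx0 : x ≠ 0 := by
        have := Multiset.of_mem_filter hx
        simpa using this
      have hy0 : y ≠ 0 := by
        have hyF : y ∈ T.filter (· ≠ 0) := by rw [hF]; simp
        have := Multiset.of_mem_filter hyF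
        simpa using this
      rcases le_total x y with hxy | hxy
      · exact hterm (x ::ₘ (y - x) ::ₘ (F'' + u))
          ⟨x, y, F'' + u, Nat.pos_of_ne_zero hx0, hxy,
            by rw [hu]; simp [Multiset.cons_add], rfl⟩
      · exact hterm (y ::ₘ (x - y) ::ₘ (F'' + u))
          ⟨y, x, F'' + u, Nat.pos_of_ne_zero hy0, hxy,
            by rw [hu, Multiset.cons_swap]; simp [Multiset.cons_add], rfl⟩
end

section
/- Serializability of atomic transactions: any (Atomic) parallel transition executing n transactions simultaneously in a common context T of data constraints can be simulated by n consecutive sequential (Atomic) transitions each executing a single transaction, provided each transaction's computation only reads but never modifies the shared data T. -/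
private lemma rt_mono {M : Type*} [CommMonoid M] {r : M → M → Prop}
    (mono : ∀ A B G : M, r A B → r (A * G) (B * G))
    {A B : M} (G : M) (h : Relation.ReflTransGen r A B) :
    Relation.ReflTransGen r (A * G) (B * G) := by
  induction h with
  | refl => exact Relation.ReflTransGen.refl
  | tail _ hr ih => exact ih.tail (mono _ _ _ hr)

/-- Serializability of atomic transactions: if each transaction `Cᵢ` executes
in isolation, in the read-only shared context `T`, from local data `Sᵢ` to
`Sᵢ'`, then the simultaneous parallel execution of all `n` transactions can be
simulated by consecutive sequential computations. -/
theorem atomic_serializability {M : Type*} [CommMonoid M]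
    (r : M → M → Prop)
    (mono : ∀ A B G : M, r A B → r (A * G) (B * G))
    (n : ℕ) (T : M) (S S' C : Fin n → M)
    (h : ∀ i, Relation.ReflTransGen r (T * S i * C i) (T * S' i)) :
    Relation.ReflTransGen r (T * ∏ i, (S i * C i)) (T * ∏ i, S' i) := by
  induction n with
  | zero => simpa using Relation.ReflTransGen.refl
  | succ n ih =>
    have h1 : Relation.ReflTransGen r
        ((T * S 0 * C 0) * ∏ i : Fin n, (S i.succ * C i.succ))
        ((T * S' 0) * ∏ i : Fin n, (S i.succ * C i.succ)) :=
      rt_mono mono _ (h 0)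
    have h2 : Relation.ReflTransGen r
        ((T * ∏ i : Fin n, (S i.succ * C i.succ)) * S' 0)
        ((T * ∏ i : Fin n, S' i.succ) * S' 0) :=
      rt_mono mono _ (ih (S ∘ Fin.succ) (S' ∘ Fin.succ) (C ∘ Fin.succ)
        (fun i => h i.succ))
    have e1 : T * ∏ i : Fin (n+1), (S i * C i)
        = (T * S 0 * C 0) * ∏ i : Fin n, (S i.succ * C i.succ) := by
      rw [Fin.prod_univ_succ]; simp only [mul_comm, mul_left_comm, mul_assoc]
    have e2 : (T * S' 0) * ∏ i : Fin n, (S i.succ * C i.succ)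
        = (T * ∏ i : Fin n, (S i.succ * C i.succ)) * S' 0 := by simp only [mul_comm, mul_left_comm, mul_assoc]
    have e3 : (T * ∏ i : Fin n, S' i.succ) * S' 0
        = T * ∏ i : Fin (n+1), S' i := by
      rw [Fin.prod_univ_succ]; simp only [mul_comm, mul_left_comm, mul_assoc]
    rw [e1]
    exact (h1.trans (e2 ▸ e3 ▸ h2))
end

section
/- Soundness of CHRmp for deletion-acyclic programs with set-rules: if a massively parallel set-based transition S ⇶ T is performed in a deletion-acyclic program P, then there exists a multiset G' containing the same underlying set of constraints as the goal of S (with possibly higher multiplicities) such that the state with goal G' reaches, by a finite sequence of ordinary sequential multiset transitions of P extended with set-rules (rules removing duplicate copies of a constraint), a state T' whose underlying set of constraints equals that of T. -/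
/-- A rule instance: kept head, removed head, body. -/
abbrev RuleInst (C : Type*) := Finset C × Finset C × Finset C

variable {C : Type*} [DecidableEq C]

/-- A rule instance is applicable in a set-based state `S`. -/
def applicable (P : Set (RuleInst C)) (S : Finset C) (ρ : RuleInst C) : Prop :=
  ρ ∈ P ∧ ρ.1 ∪ ρ.2.1 ⊆ S

/-- The massively parallel set-based CHRmp transition: apply any nonempty
(finite) subset `R` of the applicable rule instances simultaneously. -/
def mpStep (P : Set (RuleInst C)) (S T : Finset C) : Prop :=
  ∃ R : Finset (RuleInst C), R.Nonempty ∧ (∀ ρ ∈ R, applicable P S ρ) ∧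
    T = (S \ R.biUnion (fun ρ => ρ.2.1)) ∪ R.biUnion (fun ρ => ρ.2.2)

/-- Deletion dependency in state `S`: kept constraint `c` is required to
remove constraint `d` in some applicable rule instance. -/
def delDep (P : Set (RuleInst C)) (S : Finset C) (c d : C) : Prop :=
  ∃ ρ : RuleInst C, applicable P S ρ ∧ c ∈ ρ.1 ∧ d ∈ ρ.2.1

/-- A program is deletion-acyclic if on every state making a transition the
transitive closure of the deletion dependency is irreflexive. -/
def deletionAcyclic (P : Set (RuleInst C)) : Prop :=
  ∀ S T : Finset C, mpStep P S T →
    ∀ c : C, ¬ Relation.TransGen (delDep P S) c c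

/-- Ordinary sequential multiset CHR transition for the program extended with
set-rules (which remove duplicate copies of a constraint). -/
def seqStep (P : Set (RuleInst C)) (m m' : Multiset C) : Prop :=
  (∃ ρ ∈ P, ρ.1.val + ρ.2.1.val ≤ m ∧ m' = m - ρ.2.1.val + ρ.2.2.val) ∨
  (∃ (c : C) (m₀ : Multiset C), m = c ::ₘ c ::ₘ m₀ ∧ m' = c ::ₘ m₀)

/-! Fire the rule instances of the parallel step one at a time. An instance may fire once no
remaining instance keeps a constraint it removes, and deletion-acyclicity guarantees that such an
instance always exists. Starting from `S` with each removed constraint repeated once per instance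
removing it, no removal runs short and every kept head is present when needed; the run ends in the
surviving part of `S` plus all bodies. -/

theorem Finset.exists_forall_not_rel_of_not_transGen {α : Type*} {r : α → α → Prop}
    {s : Finset α} (hs : s.Nonempty) (hr : ∀ a ∈ s, ¬ Relation.TransGen r a a) :
    ∃ a ∈ s, ∀ b ∈ s, ¬ r b a := by
  let r' : s → s → Prop := Relation.TransGen fun x y => r x y
  have : Std.Irrefl r' := ⟨fun a h => hr a a.2 (h.lift _ fun _ _ => id)⟩
  obtain ⟨a, -, ha⟩ :=
    (Finite.wellFounded_of_trans_of_irrefl r').has_min Set.univ ⟨⟨_, hs.choose_spec⟩, trivial⟩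
  exact ⟨a, a.2, fun b hb hba => ha ⟨b, hb⟩ trivial (.single hba)⟩

theorem Multiset.toFinset_sum_val {ι α : Type*} [DecidableEq α] (s : Finset ι)
    (f : ι → Finset α) : (∑ i ∈ s, (f i).val).toFinset = s.biUnion f := by
  ext
  simp [Multiset.mem_sum]

def FiresBefore (P : Set (RuleInst C)) (S : Finset C) (σ ρ : RuleInst C) : Prop :=
  applicable P S σ ∧ ∃ c ∈ σ.1, c ∈ ρ.2.1

theorem exists_reflTransGen_delDep_of_transGen_firesBefore {P : Set (RuleInst C)} {S : Finset C}
    {σ ρ : RuleInst C} (h : Relation.TransGen (FiresBefore P S) σ ρ) :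
    ∃ c ∈ σ.1, ∃ e ∈ ρ.2.1, Relation.ReflTransGen (delDep P S) e c := by
  induction h with
  | single h =>
    obtain ⟨-, c, hc, hc'⟩ := h
    exact ⟨c, hc, c, hc', .refl⟩
  | tail _ hτρ ih =>
    obtain ⟨c, hc, e, he, hec⟩ := ih
    obtain ⟨hτ, f, hf, hf'⟩ := hτρ
    exact ⟨c, hc, f, hf', .head ⟨_, hτ, hf, he⟩ hec⟩

theorem not_transGen_firesBefore {P : Set (RuleInst C)} {S : Finset C}
    (hacyc : ∀ c, ¬ Relation.TransGen (delDep P S) c c) {ρ : RuleInst C}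
    (hρ : applicable P S ρ) : ¬ Relation.TransGen (FiresBefore P S) ρ ρ := fun h => by
  obtain ⟨c, hc, e, he, hec⟩ := exists_reflTransGen_delDep_of_transGen_firesBefore h
  exact hacyc c (.head' ⟨ρ, hρ, hc, he⟩ hec)

theorem reflTransGen_seqStep_of_applicable {P : Set (RuleInst C)} {S : Finset C}
    (hacyc : ∀ c, ¬ Relation.TransGen (delDep P S) c c) (R : Finset (RuleInst C))
    (happ : ∀ ρ ∈ R, applicable P S ρ) (m : Multiset C)
    (hkept : ∀ ρ ∈ R, ∀ c ∈ ρ.1, c ∈ m + ∑ σ ∈ R, σ.2.1.val) :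
    Relation.ReflTransGen (seqStep P) (m + ∑ ρ ∈ R, ρ.2.1.val) (m + ∑ ρ ∈ R, ρ.2.2.val) := by
  induction R using Finset.strongInduction generalizing m with
  | _ R ih =>
    rcases R.eq_empty_or_nonempty with rfl | hne
    · simpa using .refl
    obtain ⟨ρ₀, hρ₀, hfirst⟩ := Finset.exists_forall_not_rel_of_not_transGen hne
      fun ρ hρ => not_transGen_firesBefore hacyc (happ ρ hρ)
    set R' := R.erase ρ₀
    have hkept' : ∀ σ ∈ R, ∀ c ∈ σ.1, c ∈ m + ∑ τ ∈ R', τ.2.1.val := fun σ hσ c hc => by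
      have hc' := hkept σ hσ c hc
      rw [← Finset.add_sum_erase R _ hρ₀, add_left_comm, Multiset.mem_add] at hc'
      exact hc'.resolve_left fun hrem => hfirst σ hσ ⟨happ σ hσ, c, hc, hrem⟩
    have hfire : seqStep P (m + ∑ σ ∈ R', σ.2.1.val + ρ₀.2.1.val)
        (m + ρ₀.2.2.val + ∑ σ ∈ R', σ.2.1.val) := by
      refine .inl ⟨ρ₀, (happ ρ₀ hρ₀).1, ?_, by rw [add_tsub_cancel_right, add_right_comm]⟩
      exact add_le_add ((Multiset.le_iff_subset ρ₀.1.nodup).2 (hkept' ρ₀ hρ₀)) le_rfl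
    have hrest := ih R' (Finset.erase_ssubset hρ₀) (fun σ hσ => happ σ (Finset.mem_of_mem_erase hσ))
      (m + ρ₀.2.2.val) fun σ hσ c hc => by
        rw [add_right_comm, Multiset.mem_add]
        exact .inl (hkept' σ (Finset.mem_of_mem_erase hσ) c hc)
    rw [← Finset.sum_erase_add R _ hρ₀, ← Finset.add_sum_erase R _ hρ₀, ← add_assoc, ← add_assoc]
    exact .head hfire hrest

/-- Soundness of CHRmp for deletion-acyclic programs with set-rules: every
massively parallel set-based step can be simulated, starting from a multiset
with the same underlying set, by sequential multiset steps of the program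
extended with set-rules, ending in a multiset with the underlying set of the
target. -/
theorem chrmp_soundness (P : Set (RuleInst C)) (hacyc : deletionAcyclic P)
    {S T : Finset C} (hstep : mpStep P S T) :
    ∃ G' T' : Multiset C, G'.toFinset = S ∧
      Relation.ReflTransGen (seqStep P) G' T' ∧ T'.toFinset = T := by
  obtain ⟨R, hRne, happ, rfl⟩ := hstep
  have hacyc' := hacyc _ _ ⟨R, hRne, happ, rfl⟩
  set removed := R.biUnion fun ρ => ρ.2.1
  have hremoved : removed ⊆ S := Finset.biUnion_subset.2 fun ρ hρ =>
    Finset.subset_union_right.trans (happ ρ hρ).2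
  have hstart : ((S \ removed).val + ∑ ρ ∈ R, ρ.2.1.val).toFinset = S := by
    rw [Multiset.toFinset_add, Multiset.toFinset_sum_val, Finset.val_toFinset,
      Finset.sdiff_union_of_subset hremoved]
  refine ⟨_, (S \ removed).val + ∑ ρ ∈ R, ρ.2.2.val, hstart,
    reflTransGen_seqStep_of_applicable hacyc' R happ _ fun ρ hρ c hc => ?_, ?_⟩
  · rw [← Multiset.mem_toFinset, hstart]
    exact (happ ρ hρ).2 (Finset.mem_union_left _ hc)
  · rw [Multiset.toFinset_add, Multiset.toFinset_sum_val, Finset.val_toFinset]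
end
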